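/- (Optimism of the exploration-bonus cost.) Under the setting and hypotheses of the preceding bound — Θ̂ = [Â B̂], Θ* = [A* B*] ∈ ℝ^{n×(n+m)}, K ∈ ℝ^{m×n} with ‖K‖_F ≤ K̄, common stability constants C ≥ 1, ρ ∈ (0,1) with ‖(Â+B̂K)^k‖_F ≤ Cρ^k and ‖(A*+B*K)^k‖_F ≤ Cρ^k for all k ≥ 0, σ_w > 0, Σ_Θ := σ_w² ∑_{k=0}^∞ (A+BK)^k((A+BK)ᵀ)^k, Σ̃_Θ := [I;K] Σ_Θ [I;K]ᵀ, V symmetric positive definite, ‖(Θ̂−Θ*)V^{1/2}‖_F ≤ β, ‖Θ*‖_F ≤ D + 1/λ, and g := (C²(‖Q‖_F + K̄²‖R‖_F)/(1−ρ²))(2(D+1/λ)β‖V^{1/2}‖₂ + β²) — the bonus-modified cost is a lower bound on the true cost: tr((Q + Kᵀ R K) Σ_{Θ̂}) − g · tr(V^{-1} Σ̃_{Θ̂}) ≤ tr((Q + Kᵀ R K) Σ_{Θ*}). -/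

import Mathlib

open Matrix MeasureTheory ProbabilityTheory Filter

/-- Frobenius norm of a real matrix. -/
noncomputable def frob {α β : Type*} [Fintype α] [Fintype β] (A : Matrix α β ℝ) : ℝ :=
  Real.sqrt (∑ i, ∑ j, (A i j) ^ 2)

/-- Spectral norm (largest singular value) of a real matrix. -/
noncomputable def spec {α β : Type*} [Fintype α] [Fintype β] [DecidableEq β]
    (A : Matrix α β ℝ) : ℝ :=
  ‖LinearMap.toContinuousLinearMap (Matrix.toEuclideanLin A)‖

/-- The positive semidefinite square root of a positive semidefinite real matrix
(junk value `0` if the matrix is not positive semidefinite). -/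
noncomputable def msqrt {α : Type*} [Fintype α] [DecidableEq α]
    (M : Matrix α α ℝ) : Matrix α α ℝ :=
  open scoped Classical in
  if h : M.PosSemidef then
    h.1.eigenvectorUnitary.1 * diagonal ((↑) ∘ (√·) ∘ h.1.eigenvalues) *
      (star h.1.eigenvectorUnitary : Matrix α α ℝ) else 0

/-- Euclidean norm of a real vector. -/
noncomputable def vnorm {α : Type*} [Fintype α] (v : α → ℝ) : ℝ :=
  Real.sqrt (∑ i, (v i) ^ 2)

/-- Closed-loop stationary state covariance
`Σ_Θ = σ_w² ∑_{k=0}^∞ (A+BK)^k ((A+BK)ᵀ)^k`. -/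
noncomputable def clCov {n m : ℕ} (A : Matrix (Fin n) (Fin n) ℝ)
    (B : Matrix (Fin n) (Fin m) ℝ) (K : Matrix (Fin m) (Fin n) ℝ) (σw : ℝ) :
    Matrix (Fin n) (Fin n) ℝ :=
  σw ^ 2 • ∑' k : ℕ, (A + B * K) ^ k * ((A + B * K)ᵀ) ^ k

/-- The lifted covariance `Σ̃_Θ = [I; K] Σ_Θ [I; K]ᵀ`. -/
noncomputable def clCovTilde {n m : ℕ} (A : Matrix (Fin n) (Fin n) ℝ)
    (B : Matrix (Fin n) (Fin m) ℝ) (K : Matrix (Fin m) (Fin n) ℝ) (σw : ℝ) :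
    Matrix (Fin n ⊕ Fin m) (Fin n ⊕ Fin m) ℝ :=
  fromRows (1 : Matrix (Fin n) (Fin n) ℝ) K * clCov A B K σw *
    (fromRows (1 : Matrix (Fin n) (Fin n) ℝ) K)ᵀ


/-!
Both closed-loop covariances solve discrete Lyapunov equations `Σ = σ_w² I + L Σ Lᵀ`, so their
difference solves the one driven by `E = L̂ Σ_Θ̂ L̂ᵀ - L* Σ_Θ̂ L*ᵀ` and equals `∑ L*ᵏ E (L*ᵀ)ᵏ`.
Since `L = Θ [I; K]`, `E = Θ̂ Σ̃ Θ̂ᵀ - Θ* Σ̃ Θ*ᵀ`. Factor `Σ̃ = V^{1/2} Y (V^{1/2} Y)ᵀ`, so that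
`‖Y‖_F² = tr(V⁻¹ Σ̃)` and `(Θ̂ - Θ*) V^{1/2}` has norm at most `β`; expanding `Θ̂ = Θ* + (Θ̂ - Θ*)`
and using Cauchy–Schwarz for the trace gives
`tr(G E) ≤ ‖G‖_F (2 ‖Θ*‖_F β ‖V^{1/2}‖₂ + β²) tr(V⁻¹ Σ̃)` for every `G`. Applied to the weights
`(L*ᵀ)ᵏ M L*ᵏ`, whose norms are at most `C² ρ^{2k} ‖M‖_F`, the series sums to the factor
`C² / (1 - ρ²)`.
-/

open scoped Matrix.Norms.Frobenius

theorem frob_eq_norm {m n : Type*} [Fintype m] [Fintype n] (A : Matrix m n ℝ) :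
    frob A = ‖A‖ := by
  simp only [frob, frobenius_norm_def, Real.norm_eq_abs, Real.rpow_two, sq_abs,
    Real.sqrt_eq_rpow, one_div]

namespace Matrix

section Frobenius

variable {l m n : Type*} [Fintype l] [Fintype m] [Fintype n]

theorem frobenius_norm_sq (A : Matrix m n ℝ) : ‖A‖ ^ 2 = ∑ i, ∑ j, A i j ^ 2 := by
  rw [← frob_eq_norm, frob, Real.sq_sqrt (by positivity)]

theorem frobenius_norm_sq_eq_trace (A : Matrix m n ℝ) : ‖A‖ ^ 2 = (Aᵀ * A).trace := by
  rw [frobenius_norm_sq, Finset.sum_comm]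
  simp [trace, mul_apply, sq]

theorem trace_mul_le_frobenius_norm_mul (A : Matrix m n ℝ) (B : Matrix n m ℝ) :
    (A * B).trace ≤ ‖A‖ * ‖B‖ := by
  have h := Real.sum_mul_le_sqrt_mul_sqrt Finset.univ (fun p : m × n => A p.1 p.2)
    (fun p => Bᵀ p.1 p.2)
  simp only [Fintype.sum_prod_type] at h
  rw [← frobenius_norm_transpose B, ← frob_eq_norm, ← frob_eq_norm]
  simpa only [frob, trace, diag, mul_apply, transpose_apply] using h

theorem trace_mul_mul_transpose_le (G : Matrix m m ℝ) (X Z : Matrix m n ℝ) :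
    (G * (X * Zᵀ)).trace ≤ ‖G‖ * ‖X‖ * ‖Z‖ := by
  calc (G * (X * Zᵀ)).trace = (G * X * Zᵀ).trace := by rw [Matrix.mul_assoc]
    _ ≤ ‖G * X‖ * ‖Zᵀ‖ := trace_mul_le_frobenius_norm_mul _ _
    _ ≤ ‖G‖ * ‖X‖ * ‖Z‖ := by
      rw [frobenius_norm_transpose]
      gcongr
      exact frobenius_norm_mul G X

theorem frobenius_norm_mul_le_spec_mul [DecidableEq m] (X : Matrix l m ℝ) (Y : Matrix m n ℝ) :
    ‖X * Y‖ ≤ spec X * ‖Y‖ := by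
  have hcol : ∀ j, ∑ i, (X * Y) i j ^ 2 ≤ spec X ^ 2 * ∑ k, Y k j ^ 2 := by
    intro j
    have h := (LinearMap.toContinuousLinearMap (toEuclideanLin X)).le_opNorm
      (WithLp.toLp 2 fun k => Y k j)
    simpa [spec, mul_pow, EuclideanSpace.norm_sq_eq, toLpLin_apply, mul_apply, mulVec,
      dotProduct] using pow_le_pow_left₀ (norm_nonneg _) h 2
  have hsq : ‖X * Y‖ ^ 2 ≤ (spec X * ‖Y‖) ^ 2 := by
    rw [frobenius_norm_sq, mul_pow, frobenius_norm_sq, Finset.sum_comm,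
      Finset.sum_comm (f := fun i j => Y i j ^ 2), Finset.mul_sum]
    exact Finset.sum_le_sum fun j _ => hcol j
  exact (pow_le_pow_iff_left₀ (norm_nonneg _)
    (mul_nonneg (norm_nonneg _) (norm_nonneg _)) two_ne_zero).mp hsq

theorem norm_add_transpose_mul_mul_le (Q : Matrix n n ℝ) (R : Matrix m m ℝ) {K : Matrix m n ℝ}
    {k : ℝ} (hK : ‖K‖ ≤ k) : ‖Q + Kᵀ * R * K‖ ≤ ‖Q‖ + k ^ 2 * ‖R‖ := by
  have hk : 0 ≤ k := (norm_nonneg K).trans hK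
  have hKRK : ‖Kᵀ * R * K‖ ≤ k ^ 2 * ‖R‖ :=
    calc ‖Kᵀ * R * K‖ ≤ ‖Kᵀ * R‖ * ‖K‖ := frobenius_norm_mul _ _
      _ ≤ ‖K‖ * ‖R‖ * ‖K‖ := by
        rw [← frobenius_norm_transpose K]
        gcongr
        exact frobenius_norm_mul _ _
      _ ≤ k * ‖R‖ * k := by gcongr
      _ = k ^ 2 * ‖R‖ := by ring
  exact (norm_add_le _ _).trans (by gcongr)

end Frobenius

section Perturbation

variable {ι κ ν : Type*} [Fintype κ] [Fintype ν]

theorem mul_mul_transpose_sub_mul_mul_transpose (A A' : Matrix ι κ ℝ) (F : Matrix κ ν ℝ) :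
    A' * F * Fᵀ * A'ᵀ - A * F * Fᵀ * Aᵀ =
      (A' - A) * F * ((A' - A) * F)ᵀ + (A' - A) * F * (A * F)ᵀ + A * F * ((A' - A) * F)ᵀ := by
  obtain ⟨D, rfl⟩ : ∃ D, A' = A + D := ⟨A' - A, by abel⟩
  simp only [add_sub_cancel_left, transpose_mul, transpose_add, Matrix.add_mul, Matrix.mul_add,
    Matrix.mul_assoc]
  abel

variable [Fintype ι] [DecidableEq κ]

theorem trace_mul_perturbation_le (G : Matrix ι ι ℝ) {A A' : Matrix ι κ ℝ} {P : Matrix κ κ ℝ}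
    (Y : Matrix κ ν ℝ) {a b : ℝ} (hA : ‖A‖ ≤ a) (hW : ‖(A' - A) * P‖ ≤ b) :
    (G * (A' * (P * Y) * (P * Y)ᵀ * A'ᵀ - A * (P * Y) * (P * Y)ᵀ * Aᵀ)).trace ≤
      ‖G‖ * (2 * a * b * spec P + b ^ 2) * ‖Y‖ ^ 2 := by
  have ha : 0 ≤ a := (norm_nonneg _).trans hA
  have hb : 0 ≤ b := (norm_nonneg _).trans hW
  set X := (A' - A) * (P * Y)
  set Z := A * (P * Y)
  have hX : ‖X‖ ≤ b * ‖Y‖ := by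
    calc ‖X‖ = ‖(A' - A) * P * Y‖ := by rw [Matrix.mul_assoc]
      _ ≤ ‖(A' - A) * P‖ * ‖Y‖ := frobenius_norm_mul _ _
      _ ≤ b * ‖Y‖ := by gcongr
  have hZ : ‖Z‖ ≤ a * spec P * ‖Y‖ := by
    calc ‖Z‖ ≤ ‖A‖ * ‖P * Y‖ := frobenius_norm_mul _ _
      _ ≤ a * (spec P * ‖Y‖) := by
        gcongr
        exact frobenius_norm_mul_le_spec_mul P Y
      _ = a * spec P * ‖Y‖ := by ring
  calc (G * (A' * (P * Y) * (P * Y)ᵀ * A'ᵀ - A * (P * Y) * (P * Y)ᵀ * Aᵀ)).trace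
      = (G * (X * Xᵀ)).trace + (G * (X * Zᵀ)).trace + (G * (Z * Xᵀ)).trace := by
        rw [mul_mul_transpose_sub_mul_mul_transpose, Matrix.mul_add, Matrix.mul_add,
          trace_add, trace_add]
    _ ≤ ‖G‖ * ‖X‖ * ‖X‖ + ‖G‖ * ‖X‖ * ‖Z‖ + ‖G‖ * ‖Z‖ * ‖X‖ := by
        gcongr <;> exact trace_mul_mul_transpose_le _ _ _
    _ ≤ ‖G‖ * (b * ‖Y‖) * (b * ‖Y‖) + ‖G‖ * (b * ‖Y‖) * (a * spec P * ‖Y‖) +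
          ‖G‖ * (a * spec P * ‖Y‖) * (b * ‖Y‖) := by
        have hP : 0 ≤ spec P := norm_nonneg _
        gcongr
    _ = ‖G‖ * (2 * a * b * spec P + b ^ 2) * ‖Y‖ ^ 2 := by ring

end Perturbation

theorem posSemidef_of_hasSum {ι n : Type*} [Fintype n] {f : ι → Matrix n n ℝ} {S : Matrix n n ℝ}
    (hf : HasSum f S) (h : ∀ i, (f i).PosSemidef) : S.PosSemidef := by
  rw [posSemidef_iff_dotProduct_mulVec]
  refine ⟨?_, fun x => ?_⟩
  · have hf' : HasSum f Sᴴ := by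
      simpa only [(h _).isHermitian.eq] using hf.matrix_conjTranspose
    exact hf'.unique hf
  · let q : Matrix n n ℝ →+ ℝ := AddMonoidHom.mk' (fun X => star x ⬝ᵥ X *ᵥ x)
      fun X Y => by simp only [add_mulVec, dotProduct_add]
    have hq : Continuous q :=
      continuous_const.dotProduct (continuous_id.matrix_mulVec continuous_const)
    exact (hf.map q hq).nonneg fun i => (h i).dotProduct_mulVec_nonneg x

section Lyapunov

variable {n : Type*} [Fintype n] [DecidableEq n] {L : Matrix n n ℝ} {C ρ : ℝ}

theorem norm_pow_mul_mul_transpose_pow_le (hL : ∀ k, ‖L ^ k‖ ≤ C * ρ ^ k) (X : Matrix n n ℝ)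
    (k : ℕ) : ‖L ^ k * X * Lᵀ ^ k‖ ≤ C ^ 2 * (ρ ^ 2) ^ k * ‖X‖ := by
  have hsq : ‖L ^ k‖ * ‖L ^ k‖ ≤ C ^ 2 * (ρ ^ 2) ^ k := by
    have := mul_self_le_mul_self (norm_nonneg _) (hL k)
    linarith [show (C * ρ ^ k) * (C * ρ ^ k) = C ^ 2 * (ρ ^ 2) ^ k by ring]
  calc ‖L ^ k * X * Lᵀ ^ k‖ ≤ ‖L ^ k * X‖ * ‖Lᵀ ^ k‖ := frobenius_norm_mul _ _
    _ ≤ ‖L ^ k‖ * ‖X‖ * ‖L ^ k‖ := by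
        rw [← transpose_pow, frobenius_norm_transpose]
        gcongr
        exact frobenius_norm_mul _ _
    _ = ‖L ^ k‖ * ‖L ^ k‖ * ‖X‖ := by ring
    _ ≤ C ^ 2 * (ρ ^ 2) ^ k * ‖X‖ := by gcongr

theorem summable_pow_mul_mul_transpose_pow (hL : ∀ k, ‖L ^ k‖ ≤ C * ρ ^ k) (hρ : ρ ^ 2 < 1)
    (X : Matrix n n ℝ) : Summable fun k => L ^ k * X * Lᵀ ^ k :=
  Summable.of_norm_bounded
    (((summable_geometric_of_lt_one (sq_nonneg ρ) hρ).mul_left (C ^ 2)).mul_right ‖X‖)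
    (norm_pow_mul_mul_transpose_pow_le hL X)

theorem summable_pow_mul_transpose_pow (hL : ∀ k, ‖L ^ k‖ ≤ C * ρ ^ k) (hρ : ρ ^ 2 < 1) :
    Summable fun k => L ^ k * Lᵀ ^ k := by
  simpa only [Matrix.mul_one] using summable_pow_mul_mul_transpose_pow hL hρ 1

theorem tsum_pow_mul_transpose_pow_eq (h : Summable fun k => L ^ k * Lᵀ ^ k) :
    ∑' k, L ^ k * Lᵀ ^ k = 1 + L * (∑' k, L ^ k * Lᵀ ^ k) * Lᵀ := by
  conv_lhs => rw [h.tsum_eq_zero_add]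
  rw [((h.hasSum.mul_left L).mul_right Lᵀ).tsum_eq.symm]
  simp only [pow_zero, Matrix.mul_one, pow_succ' L, pow_succ Lᵀ, Matrix.mul_assoc]

theorem hasSum_pow_mul_mul_transpose_pow (hL : ∀ k, ‖L ^ k‖ ≤ C * ρ ^ k) (hρ : ρ ^ 2 < 1)
    {E X : Matrix n n ℝ} (hX : X = E + L * X * Lᵀ) :
    HasSum (fun k => L ^ k * E * Lᵀ ^ k) X := by
  have hpartial : ∀ N, ∑ k ∈ Finset.range N, L ^ k * E * Lᵀ ^ k = X - L ^ N * X * Lᵀ ^ N := by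
    intro N
    induction N with
    | zero => simp
    | succ N ih =>
      rw [Finset.sum_range_succ, ih, pow_succ L, pow_succ' Lᵀ]
      nth_rewrite 2 [hX]
      simp only [Matrix.mul_add, Matrix.add_mul, Matrix.mul_assoc]
      abel
  rw [(summable_pow_mul_mul_transpose_pow hL hρ E).hasSum_iff_tendsto_nat]
  simpa only [hpartial, sub_zero] using
    tendsto_const_nhds.sub (summable_pow_mul_mul_transpose_pow hL hρ X).tendsto_atTop_zero

theorem trace_mul_le_of_hasSum (hL : ∀ k, ‖L ^ k‖ ≤ C * ρ ^ k) (hρ : ρ ^ 2 < 1)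
    {E X : Matrix n n ℝ} (hX : HasSum (fun k => L ^ k * E * Lᵀ ^ k) X) {b : ℝ} (hb : 0 ≤ b)
    (hE : ∀ G : Matrix n n ℝ, (G * E).trace ≤ ‖G‖ * b) {M : Matrix n n ℝ} {μ : ℝ}
    (hM : ‖M‖ ≤ μ) : (M * X).trace ≤ C ^ 2 * μ / (1 - ρ ^ 2) * b := by
  have hLt : ∀ k, ‖Lᵀ ^ k‖ ≤ C * ρ ^ k := fun k => by
    rw [← transpose_pow, frobenius_norm_transpose]
    exact hL k
  have htrace : HasSum (fun k => (M * (L ^ k * E * Lᵀ ^ k)).trace) (M * X).trace :=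
    (hX.mul_left M).map (traceAddMonoidHom n ℝ) continuous_id.matrix_trace
  have hterm : ∀ k, (M * (L ^ k * E * Lᵀ ^ k)).trace ≤ C ^ 2 * μ * b * (ρ ^ 2) ^ k := by
    intro k
    have hG := norm_pow_mul_mul_transpose_pow_le hLt M k
    rw [transpose_transpose] at hG
    calc (M * (L ^ k * E * Lᵀ ^ k)).trace = (Lᵀ ^ k * M * L ^ k * E).trace := by
          rw [← Matrix.mul_assoc, trace_mul_comm]
          simp only [Matrix.mul_assoc]
      _ ≤ ‖Lᵀ ^ k * M * L ^ k‖ * b := hE _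
      _ ≤ C ^ 2 * (ρ ^ 2) ^ k * μ * b := by
          gcongr
          exact hG.trans (by gcongr)
      _ = C ^ 2 * μ * b * (ρ ^ 2) ^ k := by ring
  have hgeom := (hasSum_geometric_of_lt_one (sq_nonneg ρ) hρ).mul_left (C ^ 2 * μ * b)
  calc (M * X).trace ≤ C ^ 2 * μ * b * (1 - ρ ^ 2)⁻¹ := hasSum_le hterm htrace hgeom
    _ = C ^ 2 * μ / (1 - ρ ^ 2) * b := by ring

end Lyapunov

end Matrix

section msqrt

variable {n : Type*} [Fintype n] [DecidableEq n] {M : Matrix n n ℝ}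

theorem msqrt_mul_self (h : M.PosSemidef) : msqrt M * msqrt M = M := by
  rw [msqrt, dif_pos h]
  have hU : (star h.1.eigenvectorUnitary : Matrix n n ℝ) * h.1.eigenvectorUnitary.1 = 1 :=
    Matrix.UnitaryGroup.star_mul_self _
  have hd : ∀ i, √(h.1.eigenvalues i) * √(h.1.eigenvalues i) = h.1.eigenvalues i :=
    fun i => Real.mul_self_sqrt (h.eigenvalues_nonneg i)
  simp only [Matrix.mul_assoc]
  rw [← Matrix.mul_assoc (star h.1.eigenvectorUnitary : Matrix n n ℝ), hU, Matrix.one_mul,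
    ← Matrix.mul_assoc (diagonal _) (diagonal _), Matrix.diagonal_mul_diagonal]
  conv_rhs => rw [h.1.spectral_theorem]
  simp [Function.comp_def, hd, Unitary.conjStarAlgAut_apply, Matrix.mul_assoc]

theorem msqrt_transpose (h : M.PosSemidef) : (msqrt M)ᵀ = msqrt M := by
  rw [msqrt, dif_pos h, ← Matrix.conjTranspose_eq_transpose_of_trivial]
  simp only [Matrix.conjTranspose_mul, Matrix.diagonal_conjTranspose, Matrix.star_eq_conjTranspose,
    Matrix.conjTranspose_conjTranspose, star_trivial, Matrix.mul_assoc]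

theorem msqrt_mul_transpose_self (h : M.PosSemidef) : msqrt M * (msqrt M)ᵀ = M := by
  rw [msqrt_transpose h, msqrt_mul_self h]

theorem isUnit_det_msqrt (h : M.PosDef) : IsUnit (msqrt M).det := by
  have hdet := (Matrix.isUnit_iff_isUnit_det M).mp h.isUnit
  rw [← msqrt_mul_self h.posSemidef, Matrix.det_mul] at hdet
  exact isUnit_of_mul_isUnit_left hdet

theorem inv_msqrt_mul_inv_msqrt (h : M.PosDef) : (msqrt M)⁻¹ * (msqrt M)⁻¹ = M⁻¹ := by
  rw [← Matrix.mul_inv_rev, msqrt_mul_self h.posSemidef]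

end msqrt

section Factorization

variable {ι κ : Type*} [Fintype ι] [Fintype κ] [DecidableEq κ] {V T : Matrix κ κ ℝ}

theorem exists_eq_msqrt_mul_mul_transpose (hV : V.PosDef) (hT : T.PosSemidef) :
    ∃ Y : Matrix κ κ ℝ, T = msqrt V * Y * (msqrt V * Y)ᵀ ∧ ‖Y‖ ^ 2 = (V⁻¹ * T).trace := by
  refine ⟨(msqrt V)⁻¹ * msqrt T, ?_, ?_⟩
  · rw [Matrix.mul_nonsing_inv_cancel_left _ _ (isUnit_det_msqrt hV),
      msqrt_mul_transpose_self hT]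
  · rw [Matrix.frobenius_norm_sq_eq_trace, Matrix.transpose_mul, Matrix.transpose_nonsing_inv,
      msqrt_transpose hT, msqrt_transpose hV.posSemidef, Matrix.mul_assoc, Matrix.trace_mul_comm,
      ← Matrix.mul_assoc, Matrix.mul_assoc, inv_msqrt_mul_inv_msqrt hV, msqrt_mul_self hT]

theorem trace_inv_mul_nonneg (hV : V.PosDef) (hT : T.PosSemidef) : 0 ≤ (V⁻¹ * T).trace := by
  obtain ⟨Y, -, hY⟩ := exists_eq_msqrt_mul_mul_transpose hV hT
  exact hY ▸ sq_nonneg _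

theorem trace_mul_sub_le_of_posDef (hV : V.PosDef) (hT : T.PosSemidef) (G : Matrix ι ι ℝ)
    {A A' : Matrix ι κ ℝ} {a b : ℝ} (hA : ‖A‖ ≤ a) (hW : ‖(A' - A) * msqrt V‖ ≤ b) :
    (G * (A' * T * A'ᵀ - A * T * Aᵀ)).trace ≤
      ‖G‖ * ((2 * a * b * spec (msqrt V) + b ^ 2) * (V⁻¹ * T).trace) := by
  obtain ⟨Y, hTY, hY⟩ := exists_eq_msqrt_mul_mul_transpose hV hT
  rw [← hY, hTY]
  simpa only [Matrix.mul_assoc, mul_assoc] using Matrix.trace_mul_perturbation_le G Y hA hW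

end Factorization

section ClosedLoop

variable {n m : ℕ} {A : Matrix (Fin n) (Fin n) ℝ} {B : Matrix (Fin n) (Fin m) ℝ}
  {K : Matrix (Fin m) (Fin n) ℝ} {C ρ : ℝ}

theorem clCov_eq_lyapunov (hL : ∀ k, ‖(A + B * K) ^ k‖ ≤ C * ρ ^ k) (hρ : ρ ^ 2 < 1) (σw : ℝ) :
    clCov A B K σw = σw ^ 2 • 1 + (A + B * K) * clCov A B K σw * (A + B * K)ᵀ := by
  unfold clCov
  conv_lhs => rw [Matrix.tsum_pow_mul_transpose_pow_eq
    (Matrix.summable_pow_mul_transpose_pow hL hρ)]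
  rw [smul_add, Matrix.mul_smul, Matrix.smul_mul]

theorem clCov_posSemidef (hL : ∀ k, ‖(A + B * K) ^ k‖ ≤ C * ρ ^ k) (hρ : ρ ^ 2 < 1) (σw : ℝ) :
    (clCov A B K σw).PosSemidef := by
  refine .smul (Matrix.posSemidef_of_hasSum (Matrix.summable_pow_mul_transpose_pow hL hρ).hasSum
    fun k => ?_) (sq_nonneg σw)
  simpa only [Matrix.conjTranspose_eq_transpose_of_trivial, Matrix.transpose_pow] using
    Matrix.posSemidef_self_mul_conjTranspose ((A + B * K) ^ k)

theorem clCovTilde_posSemidef (hL : ∀ k, ‖(A + B * K) ^ k‖ ≤ C * ρ ^ k) (hρ : ρ ^ 2 < 1)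
    (σw : ℝ) : (clCovTilde A B K σw).PosSemidef := by
  simpa only [clCovTilde, Matrix.conjTranspose_eq_transpose_of_trivial] using
    (clCov_posSemidef hL hρ σw).mul_mul_conjTranspose_same
      (fromRows (1 : Matrix (Fin n) (Fin n) ℝ) K)

theorem fromCols_mul_clCovTilde_mul_transpose (A' : Matrix (Fin n) (Fin n) ℝ)
    (B' : Matrix (Fin n) (Fin m) ℝ) (σw : ℝ) :
    fromCols A' B' * clCovTilde A B K σw * (fromCols A' B')ᵀ =
      (A' + B' * K) * clCov A B K σw * (A' + B' * K)ᵀ := by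
  have hΘ : fromCols A' B' * fromRows (1 : Matrix (Fin n) (Fin n) ℝ) K = A' + B' * K := by
    rw [Matrix.fromCols_mul_fromRows, Matrix.mul_one]
  rw [← hΘ, Matrix.transpose_mul]
  simp only [clCovTilde, Matrix.mul_assoc]

theorem hasSum_clCov_sub_clCov {A' : Matrix (Fin n) (Fin n) ℝ} {B' : Matrix (Fin n) (Fin m) ℝ}
    (hL : ∀ k, ‖(A + B * K) ^ k‖ ≤ C * ρ ^ k) (hL' : ∀ k, ‖(A' + B' * K) ^ k‖ ≤ C * ρ ^ k)
    (hρ : ρ ^ 2 < 1) (σw : ℝ) :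
    HasSum (fun k => (A' + B' * K) ^ k *
        ((A + B * K) * clCov A B K σw * (A + B * K)ᵀ -
          (A' + B' * K) * clCov A B K σw * (A' + B' * K)ᵀ) * (A' + B' * K)ᵀ ^ k)
      (clCov A B K σw - clCov A' B' K σw) := by
  refine Matrix.hasSum_pow_mul_mul_transpose_pow hL' hρ ?_
  nth_rewrite 1 [clCov_eq_lyapunov hL hρ σw, clCov_eq_lyapunov hL' hρ σw]
  simp only [Matrix.mul_sub, Matrix.sub_mul]
  abel

end ClosedLoop

theorem optimism_of_bonus_cost_general {n m : ℕ}
    (Ahat Astar : Matrix (Fin n) (Fin n) ℝ) (Bhat Bstar : Matrix (Fin n) (Fin m) ℝ)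
    (K : Matrix (Fin m) (Fin n) ℝ) (Kbar C ρ σw lam D β : ℝ)
    (Q : Matrix (Fin n) (Fin n) ℝ) (R : Matrix (Fin m) (Fin m) ℝ)
    (V : Matrix (Fin n ⊕ Fin m) (Fin n ⊕ Fin m) ℝ)
    (hK : frob K ≤ Kbar) (hρ : ρ ∈ Set.Ioo (0 : ℝ) 1)
    (hhat : ∀ k : ℕ, frob ((Ahat + Bhat * K) ^ k) ≤ C * ρ ^ k)
    (hstar : ∀ k : ℕ, frob ((Astar + Bstar * K) ^ k) ≤ C * ρ ^ k)
    (hV : V.PosDef)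
    (hdiff : frob ((fromCols Ahat Bhat - fromCols Astar Bstar) * msqrt V) ≤ β)
    (hstarnorm : frob (fromCols Astar Bstar) ≤ D + 1 / lam) :
    ((Q + Kᵀ * R * K) * clCov Ahat Bhat K σw).trace -
        (C ^ 2 * (frob Q + Kbar ^ 2 * frob R) / (1 - ρ ^ 2)) *
          (2 * (D + 1 / lam) * β * spec (msqrt V) + β ^ 2) *
          (V⁻¹ * clCovTilde Ahat Bhat K σw).trace
      ≤ ((Q + Kᵀ * R * K) * clCov Astar Bstar K σw).trace := by
  simp only [frob_eq_norm] at hK hhat hstar hdiff hstarnorm ⊢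
  have hρ2 : ρ ^ 2 < 1 := pow_lt_one₀ hρ.1.le hρ.2 two_ne_zero
  have hT := clCovTilde_posSemidef hhat hρ2 σw
  have hc : 0 ≤ 2 * (D + 1 / lam) * β * spec (msqrt V) + β ^ 2 := by
    have hD : 0 ≤ D + 1 / lam := (norm_nonneg _).trans hstarnorm
    have hβ : 0 ≤ β := (norm_nonneg _).trans hdiff
    have hP : 0 ≤ spec (msqrt V) := norm_nonneg _
    positivity
  have hbound := Matrix.trace_mul_le_of_hasSum hstar hρ2
    (hasSum_clCov_sub_clCov hhat hstar hρ2 σw) (mul_nonneg hc (trace_inv_mul_nonneg hV hT))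
    (fun G => by
      simpa only [fromCols_mul_clCovTilde_mul_transpose] using
        trace_mul_sub_le_of_posDef hV hT G hstarnorm hdiff)
    (Matrix.norm_add_transpose_mul_mul_le Q R hK)
  rw [Matrix.mul_sub, Matrix.trace_sub] at hbound
  linarith

theorem optimism_of_bonus_cost {n m : ℕ}
    (Ahat Astar : Matrix (Fin n) (Fin n) ℝ) (Bhat Bstar : Matrix (Fin n) (Fin m) ℝ)
    (K : Matrix (Fin m) (Fin n) ℝ) (Kbar C ρ σw lam D β : ℝ)
    (Q : Matrix (Fin n) (Fin n) ℝ) (R : Matrix (Fin m) (Fin m) ℝ)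
    (V : Matrix (Fin n ⊕ Fin m) (Fin n ⊕ Fin m) ℝ)
    (hK : frob K ≤ Kbar) (hC : 1 ≤ C) (hρ : ρ ∈ Set.Ioo (0 : ℝ) 1)
    (hhat : ∀ k : ℕ, frob ((Ahat + Bhat * K) ^ k) ≤ C * ρ ^ k)
    (hstar : ∀ k : ℕ, frob ((Astar + Bstar * K) ^ k) ≤ C * ρ ^ k)
    (hσ : 0 < σw) (hQ : Q.IsSymm) (hR : R.IsSymm) (hV : V.PosDef)
    (hlam : 0 < lam) (hD : 0 ≤ D) (hβ : 0 ≤ β)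
    (hdiff : frob ((fromCols Ahat Bhat - fromCols Astar Bstar) * msqrt V) ≤ β)
    (hstarnorm : frob (fromCols Astar Bstar) ≤ D + 1 / lam) :
    ((Q + Kᵀ * R * K) * clCov Ahat Bhat K σw).trace -
        (C ^ 2 * (frob Q + Kbar ^ 2 * frob R) / (1 - ρ ^ 2)) *
          (2 * (D + 1 / lam) * β * spec (msqrt V) + β ^ 2) *
          (V⁻¹ * clCovTilde Ahat Bhat K σw).trace
      ≤ ((Q + Kᵀ * R * K) * clCov Astar Bstar K σw).trace :=
  optimism_of_bonus_cost_general Ahat Astar Bhat Bstar K Kbar C ρ σw lam D β Q R V hK hρ hhat hstar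
    hV hdiff hstarnorm
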